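/- arXiv:1410.0979 — 2 statements merged into one kernel-verified Lean document; each statement's English description precedes it below -/
import Mathlib

section
/- Let q₂* = (1/3)^(1/3) and for l ≥ 3 let q_l* be the larger root in (0,1) of q^l(1-q) = 1/(l(l+1)). If q ≤ (1/3)^(1/3) then group size 1 minimizes E(k, 1-q) over all positive integers k, and if q_{l-1}* < q < q_l* for some l ≥ 3 then group size l is the minimizer. -/
open Real Set Filter

/-- Expected number of tests per person in the Dorfman two-stage procedure
with group size `k` and prevalence `p`: `E 1 p = 1` and
`E k p = 1 - (1-p)^k + 1/k` for `k ≥ 2`. -/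
noncomputable def E (k : ℕ) (p : ℝ) : ℝ :=
  if k = 1 then 1 else 1 - (1 - p) ^ k + 1 / k

/-- Optimal expected number of tests per person: infimum over group sizes `k ≥ 1`. -/
noncomputable def Estar (p : ℝ) : ℝ := ⨅ k : ℕ+, E k p

/-- Loss of using group size `k` at prevalence `p`. -/
noncomputable def L (k : ℕ) (p : ℝ) : ℝ := E k p - Estar p

/-!
Write `φⱼ(x) = x ^ j * (1 - x)`. For `j ≥ 2` the increment `E(j+1, 1-q) - E(j, 1-q)` equals
`φⱼ(q) - 1/(j(j+1))`, while `E(k, 1-q) ≤ E(1, 1-q) = 1` iff `1/k ≤ q ^ k`. Since `φⱼ` increases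
up to `j/(j+1)` and decreases afterwards, the largest root `q_j*` lies in `[j/(j+1), 1)`; hence
`φⱼ(q) < 1/(j(j+1))` for `q > q_j*`, and `(q_j*) ^ (j+1) ≥ 1/(j+1)`. From `q_j* ≥ j/(j+1)` one also
gets `q_j* ≤ q_{j+1}*`.

Let `q_{l-1}* < q < q_l*`. Then `E(·, 1-q)` decreases on `2, …, l` (at `j = 2` because
`max φ₂ = 4/27 < 1/6`), and `q ^ l ≥ (q_{l-1}*) ^ l ≥ 1/l` gives `E(l) ≤ E(1)`. For `n ≥ l`, either
`q ^ (n+1) ≤ 1/(n+1)`, so that `E(n+1) ≥ E(1)`, or `E(n+1) ≥ E(n)`: if `q ≥ n/(n+1)` this is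
`q ≤ q_n*`, and otherwise `φₙ(q) ≥ q ^ (n+1) / n > 1/(n(n+1))`.

For `q ≤ 3^(-1/3) ≤ 3/4` one has `q ^ k ≤ 1/k` for every `k ≥ 2`, so `E(1) ≤ E(k)`.
-/

section PowMulOneSub

variable {j : ℕ} {a c x : ℝ}

lemma hasDerivAt_pow_mul_one_sub (hj : 1 ≤ j) (x : ℝ) :
    HasDerivAt (fun x : ℝ => x ^ j * (1 - x)) (x ^ (j - 1) * (j - (j + 1) * x)) x := by
  have hpow : x ^ j = x ^ (j - 1) * x := by rw [← pow_succ, Nat.sub_add_cancel hj]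
  refine ((hasDerivAt_pow j x).mul ((hasDerivAt_id x).const_sub 1)).congr_deriv ?_
  simp only [id, hpow]
  ring

lemma continuous_pow_mul_one_sub (j : ℕ) : Continuous fun x : ℝ => x ^ j * (1 - x) := by
  fun_prop

lemma strictMonoOn_pow_mul_one_sub (hj : 1 ≤ j) :
    StrictMonoOn (fun x : ℝ => x ^ j * (1 - x)) (Icc 0 (j / (j + 1))) := by
  refine strictMonoOn_of_deriv_pos (convex_Icc _ _)
    (continuous_pow_mul_one_sub j).continuousOn fun x hx => ?_
  rw [interior_Icc, mem_Ioo, lt_div_iff₀ (by positivity)] at hx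
  rw [(hasDerivAt_pow_mul_one_sub hj x).deriv]
  exact mul_pos (pow_pos hx.1 _) (by linarith)

lemma strictAntiOn_pow_mul_one_sub (hj : 1 ≤ j) :
    StrictAntiOn (fun x : ℝ => x ^ j * (1 - x)) (Icc (j / (j + 1)) 1) := by
  refine strictAntiOn_of_deriv_neg (convex_Icc _ _)
    (continuous_pow_mul_one_sub j).continuousOn fun x hx => ?_
  rw [interior_Icc, mem_Ioo, div_lt_iff₀ (by positivity)] at hx
  rw [(hasDerivAt_pow_mul_one_sub hj x).deriv]
  have hx0 : 0 < x := by
    have : (0 : ℝ) < j := by exact_mod_cast hj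
    nlinarith
  exact mul_neg_of_pos_of_neg (pow_pos hx0 _) (by linarith)

lemma pow_mul_one_sub_le_of_mem_Icc (hj : 1 ≤ j) (hx : x ∈ Icc 0 1) :
    x ^ j * (1 - x) ≤ (j / (j + 1)) ^ j * (1 - j / (j + 1)) := by
  have hm : (j / (j + 1) : ℝ) ∈ Icc 0 1 :=
    ⟨by positivity, div_le_one_of_le₀ (by linarith) (by positivity)⟩
  rcases le_total x (j / (j + 1)) with hxm | hmx
  · exact (strictMonoOn_pow_mul_one_sub hj).monotoneOn ⟨hx.1, hxm⟩ ⟨hm.1, le_rfl⟩ hxm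
  · exact (strictAntiOn_pow_mul_one_sub hj).antitoneOn ⟨le_rfl, hm.2⟩ ⟨hmx, hx.2⟩ hmx

/-- Both directions come from `j * x ^ j * (1 - x) - x ^ (j + 1) = x ^ j * (j - (j + 1) * x)`. -/
lemma pow_succ_le_mul_pow_mul_one_sub (hx0 : 0 ≤ x) (hx : x ≤ j / (j + 1)) :
    x ^ (j + 1) ≤ j * (x ^ j * (1 - x)) := by
  rw [le_div_iff₀ (by positivity)] at hx
  nlinarith [mul_nonneg (pow_nonneg hx0 j) (by linarith : (0 : ℝ) ≤ j - x * (j + 1)),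
    pow_succ x j]

lemma mul_pow_mul_one_sub_le_pow_succ (hx : j / (j + 1) ≤ x) :
    j * (x ^ j * (1 - x)) ≤ x ^ (j + 1) := by
  have hx0 : 0 ≤ x := le_trans (by positivity) hx
  rw [div_le_iff₀ (by positivity)] at hx
  nlinarith [mul_nonneg (pow_nonneg hx0 j) (by linarith : (0 : ℝ) ≤ x * (j + 1) - j),
    pow_succ x j]

lemma exists_mem_Ico_pow_mul_one_sub_eq (ha : a ≤ 1) (hc : 0 < c)
    (hca : c ≤ a ^ j * (1 - a)) : ∃ t ∈ Ico a 1, t ^ j * (1 - t) = c := by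
  obtain ⟨t, ht, htc⟩ := intermediate_value_Icc' ha (continuous_pow_mul_one_sub j).continuousOn
    ⟨by simpa using hc.le, hca⟩
  refine ⟨t, ⟨ht.1, lt_of_le_of_ne ht.2 ?_⟩, htc⟩
  rintro rfl
  simp at htc
  exact hc.ne htc

end PowMulOneSub

section LargestRoot

variable {j : ℕ} {a c s x : ℝ}

lemma IsGreatest.le_of_le_pow_mul_one_sub
    (hs : IsGreatest {x ∈ Ioo (0 : ℝ) 1 | x ^ j * (1 - x) = c} s)
    (hc : 0 < c) (ha : a ∈ Ioc 0 1) (hca : c ≤ a ^ j * (1 - a)) : a ≤ s := by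
  obtain ⟨t, ht, htc⟩ := exists_mem_Ico_pow_mul_one_sub_eq ha.2 hc hca
  exact ht.1.trans (hs.2 ⟨⟨ha.1.trans_le ht.1, ht.2⟩, htc⟩)

lemma IsGreatest.div_le
    (hs : IsGreatest {x ∈ Ioo (0 : ℝ) 1 | x ^ j * (1 - x) = c} s)
    (hc : 0 < c) (hj : 1 ≤ j) : j / (j + 1) ≤ s := by
  have hj0 : (0 : ℝ) < j := by exact_mod_cast hj
  refine hs.le_of_le_pow_mul_one_sub hc
    ⟨by positivity, div_le_one_of_le₀ (by linarith) (by positivity)⟩ ?_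
  rw [← hs.1.2]
  exact pow_mul_one_sub_le_of_mem_Icc hj ⟨hs.1.1.1.le, hs.1.1.2.le⟩

lemma IsGreatest.pow_mul_one_sub_lt
    (hs : IsGreatest {x ∈ Ioo (0 : ℝ) 1 | x ^ j * (1 - x) = c} s)
    (hc : 0 < c) (hj : 1 ≤ j) (hsx : s < x) (hx : x ≤ 1) : x ^ j * (1 - x) < c := by
  have hm := hs.div_le hc hj
  rw [← hs.1.2]
  exact strictAntiOn_pow_mul_one_sub hj ⟨hm, hs.1.1.2.le⟩ ⟨hm.trans hsx.le, hx⟩ hsx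

lemma IsGreatest.le_pow_mul_one_sub
    (hs : IsGreatest {x ∈ Ioo (0 : ℝ) 1 | x ^ j * (1 - x) = c} s)
    (hc : 0 < c) (hj : 1 ≤ j) (hx0 : 0 ≤ x) (hxs : x ≤ s) (hpow : j * c ≤ x ^ (j + 1)) :
    c ≤ x ^ j * (1 - x) := by
  rcases le_total x (j / (j + 1)) with hxm | hmx
  · have hj0 : (0 : ℝ) < j := by exact_mod_cast hj
    have := hpow.trans (pow_succ_le_mul_pow_mul_one_sub hx0 hxm)
    exact le_of_mul_le_mul_left this hj0
  · rw [← hs.1.2]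
    exact (strictAntiOn_pow_mul_one_sub hj).antitoneOn ⟨hmx, hxs.trans hs.1.1.2.le⟩
      ⟨hs.div_le hc hj, hs.1.1.2.le⟩ hxs

lemma IsGreatest.mul_le_pow_succ
    (hs : IsGreatest {x ∈ Ioo (0 : ℝ) 1 | x ^ j * (1 - x) = c} s)
    (hc : 0 < c) (hj : 1 ≤ j) : j * c ≤ s ^ (j + 1) := by
  rw [← hs.1.2]
  exact mul_pow_mul_one_sub_le_pow_succ (hs.div_le hc hj)

end LargestRoot

/-- Since `s ≥ j / (j + 1)`, `s ^ (j + 1) * (1 - s) = s / (j * (j + 1)) ≥ 1 / (j + 1) ^ 2`. -/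
lemma IsGreatest.le_isGreatest_succ {j : ℕ} {s t : ℝ} (hj : 1 ≤ j)
    (hs : IsGreatest {x ∈ Ioo (0 : ℝ) 1 | x ^ j * (1 - x) = 1 / (j * (j + 1))} s)
    (ht : IsGreatest {x ∈ Ioo (0 : ℝ) 1 |
      x ^ (j + 1) * (1 - x) = 1 / ((j + 1 : ℕ) * ((j + 1 : ℕ) + 1))} t) : s ≤ t := by
  have hj0 : (0 : ℝ) < j := by exact_mod_cast hj
  have hsm := hs.div_le (by positivity) hj
  refine ht.le_of_le_pow_mul_one_sub (by positivity) ⟨hs.1.1.1, hs.1.1.2.le⟩ ?_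
  rw [pow_succ, mul_right_comm, hs.1.2]
  rw [div_le_iff₀ (by positivity)] at hsm
  push_cast
  rw [div_mul_eq_mul_div, one_mul, div_le_div_iff₀ (by positivity) (by positivity)]
  nlinarith

lemma IsGreatest.one_div_le_pow_succ {j : ℕ} {s : ℝ} (hj : 1 ≤ j)
    (hs : IsGreatest {x ∈ Ioo (0 : ℝ) 1 | x ^ j * (1 - x) = 1 / (j * (j + 1))} s) :
    1 / (j + 1 : ℕ) ≤ s ^ (j + 1) := by
  have hj0 : (0 : ℝ) < j := by exact_mod_cast hj
  convert hs.mul_le_pow_succ (by positivity) hj using 1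
  push_cast
  field_simp

lemma apply_le_apply_of_succ_le {α : Type*} [Preorder α] {f : ℕ → α} {a b : ℕ} (hab : a ≤ b)
    (h : ∀ n, a ≤ n → n < b → f (n + 1) ≤ f n) : f b ≤ f a := by
  induction b, hab using Nat.le_induction with
  | base => exact le_rfl
  | succ n han ih => exact (h n han n.lt_succ_self).trans (ih fun m ham hmn => h m ham (by omega))

lemma apply_le_apply_of_le_succ_or {α : Type*} [Preorder α] {f : ℕ → α} {a n : ℕ} {b : α}
    (hb : f a ≤ b) (h : ∀ m, a ≤ m → f m ≤ f (m + 1) ∨ b ≤ f (m + 1)) (han : a ≤ n) :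
    f a ≤ f n := by
  induction n, han using Nat.le_induction with
  | base => exact le_rfl
  | succ m ham ih => exact (h m ham).elim ih.trans hb.trans

lemma pow_succ_le_one_div_succ {n : ℕ} {x : ℝ} (hx0 : 0 ≤ x) (hx : x ≤ n / (n + 1))
    (hxn : x ^ n ≤ 1 / n) : x ^ (n + 1) ≤ 1 / (n + 1 : ℕ) := by
  rcases n.eq_zero_or_pos with rfl | hn
  · norm_num at hxn
  calc x ^ (n + 1) = x * x ^ n := pow_succ' x n
    _ ≤ n / (n + 1) * (1 / n) := mul_le_mul hx hxn (by positivity) (by positivity)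
    _ = 1 / (n + 1 : ℕ) := by push_cast; field_simp

lemma rpow_one_third_pow_three : (((1 : ℝ) / 3) ^ ((1 : ℝ) / 3)) ^ 3 = 1 / 3 := by
  rw [← Real.rpow_natCast, ← Real.rpow_mul (by norm_num)]
  norm_num

lemma rpow_one_third_pow_le {k : ℕ} (hk : 2 ≤ k) :
    (((1 : ℝ) / 3) ^ ((1 : ℝ) / 3)) ^ k ≤ 1 / k := by
  set c : ℝ := ((1 : ℝ) / 3) ^ ((1 : ℝ) / 3)
  have hc0 : 0 ≤ c := by positivity
  have hc : c ≤ 3 / 4 :=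
    le_of_pow_le_pow_left₀ three_ne_zero (by norm_num) (by rw [rpow_one_third_pow_three]; norm_num)
  obtain rfl | hk3 := hk.eq_or_lt
  · have : (c ^ 2) ^ 3 ≤ (1 / 2) ^ 3 := by
      rw [← pow_mul, mul_comm, pow_mul, rpow_one_third_pow_three]
      norm_num
    exact_mod_cast le_of_pow_le_pow_left₀ three_ne_zero (by norm_num) this
  induction k, (hk3 : 3 ≤ k) using Nat.le_induction with
  | base => exact_mod_cast rpow_one_third_pow_three.le
  | succ n hn ih =>
    have hn' : (3 : ℝ) ≤ n := by exact_mod_cast hn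
    refine pow_succ_le_one_div_succ hc0 (hc.trans ?_) (ih (by omega))
    rw [div_le_div_iff₀ (by norm_num) (by positivity)]
    linarith

lemma E_one (p : ℝ) : E 1 p = 1 := by simp [E]

lemma E_one_sub {k : ℕ} (hk : k ≠ 1) (q : ℝ) : E k (1 - q) = 1 - q ^ k + 1 / k := by
  simp [E, hk]

lemma E_succ_sub_E_one_sub {j : ℕ} (hj : 2 ≤ j) (q : ℝ) :
    E (j + 1) (1 - q) - E j (1 - q) = q ^ j * (1 - q) - 1 / (j * (j + 1)) := by
  rw [E_one_sub (by omega), E_one_sub (by omega)]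
  have hj0 : (j : ℝ) ≠ 0 := by positivity
  push_cast
  field_simp
  ring

lemma E_three_le_E_two {q : ℝ} (hq : 0 ≤ q) : E 3 (1 - q) ≤ E 2 (1 - q) := by
  have := E_succ_sub_E_one_sub le_rfl q
  norm_num at this
  nlinarith [mul_nonneg (sq_nonneg (3 * q - 2)) hq]

lemma E_succ_le_of_isGreatest_lt {j : ℕ} {s q : ℝ} (hj : 2 ≤ j)
    (hs : IsGreatest {x ∈ Ioo (0 : ℝ) 1 | x ^ j * (1 - x) = 1 / (j * (j + 1))} s)
    (hsq : s < q) (hq : q ≤ 1) : E (j + 1) (1 - q) ≤ E j (1 - q) := by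
  have := hs.pow_mul_one_sub_lt (by positivity) (by omega) hsq hq
  linarith [E_succ_sub_E_one_sub hj q]

lemma E_le_E_succ_or_E_one_le {n : ℕ} {s q : ℝ} (hn : 2 ≤ n)
    (hs : IsGreatest {x ∈ Ioo (0 : ℝ) 1 | x ^ n * (1 - x) = 1 / (n * (n + 1))} s)
    (hq0 : 0 ≤ q) (hqs : q ≤ s) :
    E n (1 - q) ≤ E (n + 1) (1 - q) ∨ E 1 (1 - q) ≤ E (n + 1) (1 - q) := by
  rw [E_one, E_one_sub (by omega : n + 1 ≠ 1)]
  by_cases hpow : q ^ (n + 1) ≤ 1 / (n + 1 : ℕ)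
  · exact Or.inr (by linarith)
  left
  have hn0 : (0 : ℝ) < n := by exact_mod_cast (by omega : 0 < n)
  have hc : n * (1 / (n * (n + 1))) ≤ q ^ (n + 1) := by
    push_cast at hpow
    rw [show (n : ℝ) * (1 / (n * (n + 1))) = 1 / (n + 1) by field_simp]
    linarith
  have := hs.le_pow_mul_one_sub (by positivity) (by omega) hq0 hqs hc
  linarith [E_succ_sub_E_one_sub hn q, E_one_sub (by omega : n + 1 ≠ 1) q]

lemma E_one_le_of_le_rpow_one_third {q : ℝ} (hq0 : 0 ≤ q) (hq : q ≤ ((1 : ℝ) / 3) ^ ((1 : ℝ) / 3))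
    {k : ℕ} (hk : 1 ≤ k) : E 1 (1 - q) ≤ E k (1 - q) := by
  obtain rfl | hk2 := hk.eq_or_lt
  · exact le_rfl
  rw [E_one, E_one_sub hk2.ne']
  have := (pow_le_pow_left₀ hq0 hq k).trans (rpow_one_third_pow_le hk2)
  linarith

lemma E_le_of_between_largest_roots (qstar : ℕ → ℝ) (hq2 : qstar 2 = ((1 : ℝ) / 3) ^ ((1 : ℝ) / 3))
    (hgreat : ∀ l : ℕ, 3 ≤ l →
      IsGreatest {x ∈ Ioo (0 : ℝ) 1 | x ^ l * (1 - x) = 1 / (l * (l + 1))} (qstar l))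
    {l : ℕ} (hl : 3 ≤ l) {q : ℝ} (hlq : qstar (l - 1) < q) (hql : q < qstar l)
    {k : ℕ} (hk : 1 ≤ k) : E l (1 - q) ≤ E k (1 - q) := by
  have hmono : MonotoneOn qstar {n | 3 ≤ n} := monotoneOn_nat_Ici_of_le_succ fun n hn =>
    (hgreat n hn).le_isGreatest_succ (by omega) (hgreat (n + 1) (by omega))
  have hq1 : q < 1 := hql.trans (hgreat l hl).1.1.2
  obtain ⟨hq0, hpow⟩ : 0 < q ∧ 1 / l ≤ q ^ l := by
    obtain ⟨j, rfl⟩ : ∃ j, l = j + 1 := ⟨l - 1, by omega⟩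
    rw [Nat.add_sub_cancel] at hlq
    obtain ⟨hs0, hspow⟩ : 0 < qstar j ∧ 1 / (j + 1 : ℕ) ≤ qstar j ^ (j + 1) := by
      obtain rfl | hj := (show 2 ≤ j by omega).eq_or_lt
      · rw [hq2, rpow_one_third_pow_three]
        exact ⟨by positivity, by norm_num⟩
      · exact ⟨(hgreat j hj).1.1.1, (hgreat j hj).one_div_le_pow_succ (by omega)⟩
    exact ⟨hs0.trans hlq, hspow.trans (pow_le_pow_left₀ hs0.le hlq.le _)⟩
  have hE1 : E l (1 - q) ≤ E 1 (1 - q) := by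
    rw [E_one, E_one_sub (by omega)]
    linarith
  obtain rfl | hk2 := hk.eq_or_lt
  · exact hE1
  rcases le_total k l with hkl | hlk
  · refine apply_le_apply_of_succ_le (f := fun n => E n (1 - q)) hkl fun n hkn hnl => ?_
    obtain rfl | hn := (show 2 ≤ n by omega).eq_or_lt
    · exact E_three_le_E_two hq0.le
    · exact E_succ_le_of_isGreatest_lt (by omega) (hgreat n hn)
        ((hmono hn (show 3 ≤ l - 1 by omega) (by omega)).trans_lt hlq) hq1.le
  · refine apply_le_apply_of_le_succ_or (f := fun n => E n (1 - q)) hE1 (fun n hln => ?_) hlk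
    exact E_le_E_succ_or_E_one_le (by omega) (hgreat n (by omega)) hq0.le
      (hql.le.trans (hmono hl (show 3 ≤ n by omega) hln))

theorem samuels_inverse (qstar : ℕ → ℝ)
    (hq2 : qstar 2 = ((1:ℝ)/3) ^ ((1:ℝ)/3))
    (hroot : ∀ l : ℕ, 3 ≤ l → qstar l ∈ Set.Ioo (0:ℝ) 1 ∧
      (qstar l) ^ l * (1 - qstar l) = 1 / (l * (l+1)) ∧
      (∀ q ∈ Set.Ioo (0:ℝ) 1, q ^ l * (1 - q) = 1 / (l * (l+1)) → q ≤ qstar l)) :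
    (∀ q : ℝ, 0 < q → q ≤ ((1:ℝ)/3) ^ ((1:ℝ)/3) →
      ∀ k : ℕ, 1 ≤ k → E 1 (1 - q) ≤ E k (1 - q)) ∧
    (∀ l : ℕ, 3 ≤ l → ∀ q : ℝ, qstar (l-1) < q → q < qstar l →
      ∀ k : ℕ, 1 ≤ k → E l (1 - q) ≤ E k (1 - q)) := by
  have hgreat : ∀ l : ℕ, 3 ≤ l →
      IsGreatest {x ∈ Ioo (0 : ℝ) 1 | x ^ l * (1 - x) = 1 / (l * (l + 1))} (qstar l) :=
    fun l hl => ⟨⟨(hroot l hl).1, (hroot l hl).2.1⟩, fun x hx => (hroot l hl).2.2 x hx.1 hx.2⟩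
  exact ⟨fun q hq0 hq k hk => E_one_le_of_le_rpow_one_third hq0.le hq hk,
    fun l hl q hlq hql k hk => E_le_of_between_largest_roots qstar hq2 hgreat hl hlq hql hk⟩
end

section
/- For each integer k ≥ 1, the limit as p → 0⁺ of the loss L(k,p) = E(k,p) - min_{j ≥ 1} E(j,p) equals 1/k. -/
open Real Set Filter

/-!
As `p → 0⁺`, `E k p → 1 / k` because `E k` is continuous, while the optimum `Estar p` tends
to `0`: it lies between `0` and `E n p ≤ n p + 1 / n` (Bernoulli's inequality) for every `n ≥ 2`.
-/

open scoped Topology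

theorem continuous_E (k : ℕ) : Continuous (E k) := by
  unfold E
  split <;> fun_prop

theorem E_zero_right (k : ℕ) : E k 0 = 1 / k := by
  unfold E
  split <;> simp_all

theorem tendsto_E_nhdsGT_zero (k : ℕ) : Tendsto (E k) (𝓝[>] 0) (𝓝 (1 / k)) :=
  E_zero_right k ▸ (continuous_E k).continuousWithinAt.tendsto

theorem E_nonneg (j : ℕ) {p : ℝ} (hp : p ∈ Icc 0 1) : 0 ≤ E j p := by
  unfold E
  split
  · exact zero_le_one
  · have : (1 - p) ^ j ≤ 1 := pow_le_one₀ (by linarith [hp.2]) (by linarith [hp.1])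
    have : (0 : ℝ) ≤ 1 / j := by positivity
    linarith

theorem E_le_mul_add_one_div {n : ℕ} (hn : n ≠ 1) {p : ℝ} (hp : p ≤ 2) :
    E n p ≤ n * p + 1 / n := by
  have bernoulli : 1 - n * p ≤ (1 - p) ^ n := by
    simpa [← sub_eq_add_neg] using one_add_mul_le_pow (a := -p) (by linarith) n
  rw [E, if_neg hn]
  linarith

theorem Estar_nonneg {p : ℝ} (hp : p ∈ Icc 0 1) : 0 ≤ Estar p :=
  Real.iInf_nonneg fun j => E_nonneg j hp

theorem Estar_le_E {p : ℝ} (hp : p ∈ Icc 0 1) (n : ℕ+) : Estar p ≤ E n p :=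
  ciInf_le ⟨0, by rintro _ ⟨j, rfl⟩; exact E_nonneg j hp⟩ n

theorem tendsto_Estar_nhdsGT_zero : Tendsto Estar (𝓝[>] 0) (𝓝 0) := by
  have hp : ∀ᶠ p in 𝓝[>] (0 : ℝ), p ∈ Icc 0 1 :=
    mem_of_superset (Ioo_mem_nhdsGT one_pos) Ioo_subset_Icc_self
  refine tendsto_order.2 ⟨fun a ha => hp.mono fun p hp => ha.trans_le (Estar_nonneg hp),
    fun ε hε => ?_⟩
  obtain ⟨N, hN⟩ := exists_nat_one_div_lt hε
  set n : ℕ+ := ⟨N + 2, by omega⟩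
  have hn : 1 / (n : ℝ) < ε :=
    (one_div_le_one_div_of_le (by positivity) (by simp [n])).trans_lt hN
  have hbound : Tendsto (fun p : ℝ => n * p + 1 / n) (𝓝[>] 0) (𝓝 (1 / n)) :=
    (Continuous.tendsto' (by fun_prop) 0 _ (by simp)).mono_left nhdsWithin_le_nhds
  filter_upwards [hp, hbound.eventually (gt_mem_nhds hn)] with p hp hlt
  calc Estar p ≤ E n p := Estar_le_E hp n
    _ ≤ n * p + 1 / n := E_le_mul_add_one_div (by simp [n]) (by linarith [hp.2])
    _ < ε := hlt

theorem loss_limit_at_zero_general (k : ℕ) :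
    Filter.Tendsto (fun p => L k p) (nhdsWithin 0 (Set.Ioi 0)) (nhds (1 / k)) := by
  simpa [L] using (tendsto_E_nhdsGT_zero k).sub tendsto_Estar_nhdsGT_zero

theorem loss_limit_at_zero (k : ℕ) (hk : 1 ≤ k) :
    Filter.Tendsto (fun p => L k p) (nhdsWithin 0 (Set.Ioi 0)) (nhds (1 / k)) :=
  loss_limit_at_zero_general k
end
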